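/- The word returned by the Extension Algorithm is synchronizing and has length at most |v_e| + |v_s| + (|C_e| - |C_s|)·max over visited subsets S of |u(S)|, where u(S) is the shortest extension word chosen at the step with current set S. -/
import Mathlib

/-- Action of a word on a state of a DFA. -/
def act {Q A : Type*} (δ : Q → A → Q) (q : Q) (w : List A) : Q := w.foldl δ q

/-- Preimage `S·w⁻¹ = {q : q·w ∈ S}` of a subset under a word. -/
def preim {Q A : Type*} [Fintype Q] [DecidableEq Q] (δ : Q → A → Q)
    (S : Finset Q) (w : List A) : Finset Q :=
  Finset.univ.filter fun q => act δ q w ∈ S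

lemma act_append {Q A : Type*} (δ : Q → A → Q) (q : Q) (a b : List A) :
    act δ q (a ++ b) = act δ (act δ q a) b := List.foldl_append ..

lemma exists_min {α : Type*} {P : List α → Prop} (h : ∃ u, P u) :
    ∃ u, P u ∧ ∀ u', P u' → u.length ≤ u'.length := by
  classical
  have hne : ∃ n, ∃ u : List α, P u ∧ u.length = n := by
    obtain ⟨u, hu⟩ := h; exact ⟨u.length, u, hu, rfl⟩
  obtain ⟨u0, hu0, hlen⟩ := Nat.find_spec hne
  exact ⟨u0, hu0, fun u' hu' => hlen ▸ Nat.find_le ⟨u', hu', rfl⟩⟩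

lemma step_exists {Q A : Type*} [Fintype Q] [DecidableEq Q] (δ : Q → A → Q)
    (hsync : ∃ (w : List A) (p : Q), ∀ q : Q, act δ q w = p)
    (hsc : ∀ p q : Q, ∃ u : List A, act δ p u = q)
    (Ce S : Finset Q) (hS : S.Nonempty) (hlt : (S ∩ Ce).card < Ce.card) :
    ∃ u, (S ∩ Ce).card < (preim δ S u ∩ Ce).card := by
  obtain ⟨w, p, hw⟩ := hsync
  obtain ⟨s, hs⟩ := hS
  obtain ⟨t, ht⟩ := hsc p s
  refine ⟨w ++ t, ?_⟩
  have huniv : preim δ S (w ++ t) = Finset.univ := by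
    ext q
    simp [preim, act_append, hw, ht, hs]
  rw [huniv, Finset.univ_inter]
  exact hlt

lemma build {Q A : Type*} [Fintype Q] [DecidableEq Q] (δ : Q → A → Q)
    (hsync : ∃ (w : List A) (p : Q), ∀ q : Q, act δ q w = p)
    (hsc : ∀ p q : Q, ∃ u : List A, act δ p u = q) (Ce : Finset Q) :
    ∀ k (S : Finset Q), S.Nonempty → Ce.card - (S ∩ Ce).card ≤ k →
    ∃ (m : ℕ) (u : Fin m → List A) (T : Fin (m + 1) → Finset Q),
      m ≤ Ce.card - (S ∩ Ce).card ∧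
      T 0 = S ∧
      (∀ i : Fin m, T i.succ = preim δ (T i.castSucc) (u i)) ∧
      (∀ i : Fin m,
        ((T i.castSucc) ∩ Ce).card < (preim δ (T i.castSucc) (u i) ∩ Ce).card) ∧
      (∀ i : Fin m, ∀ u' : List A,
        ((T i.castSucc) ∩ Ce).card < (preim δ (T i.castSucc) u' ∩ Ce).card →
        (u i).length ≤ u'.length) ∧
      (∀ q ∈ Ce, act δ q ((List.ofFn u).reverse).flatten ∈ S) := by
  intro k
  induction k with
  | zero =>
    intro S hSne hk
    have hle : Ce.card ≤ (S ∩ Ce).card := by omega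
    have heq : S ∩ Ce = Ce :=
      Finset.eq_of_subset_of_card_le Finset.inter_subset_right hle
    refine ⟨0, Fin.elim0, fun _ => S, Nat.zero_le _, rfl,
      fun i => i.elim0, fun i => i.elim0, fun i => i.elim0, fun q hq => ?_⟩
    have : q ∈ S ∩ Ce := by rw [heq]; exact hq
    simpa [act] using (Finset.mem_inter.mp this).1
  | succ k ih =>
    intro S hSne hk
    by_cases hfull : Ce.card ≤ (S ∩ Ce).card
    · have heq : S ∩ Ce = Ce :=
        Finset.eq_of_subset_of_card_le Finset.inter_subset_right hfull
      refine ⟨0, Fin.elim0, fun _ => S, Nat.zero_le _, rfl,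
        fun i => i.elim0, fun i => i.elim0, fun i => i.elim0, fun q hq => ?_⟩
      have : q ∈ S ∩ Ce := by rw [heq]; exact hq
      simpa [act] using (Finset.mem_inter.mp this).1
    · push_neg at hfull
      obtain ⟨u0, hu0, hu0min⟩ := exists_min (step_exists δ hsync hsc Ce S hSne hfull)
      set S' := preim δ S u0 with hS'def
      have hS'ne : S'.Nonempty := by
        have : 0 < (S' ∩ Ce).card := lt_of_le_of_lt (Nat.zero_le _) hu0
        have := Finset.card_pos.mp this
        exact this.mono Finset.inter_subset_left
      have hk' : Ce.card - (S' ∩ Ce).card ≤ k := by omega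
      obtain ⟨m', u', T', hm', hT0, hstep, hinc, hmin, hland⟩ := ih S' hS'ne hk'
      have hcard' : (S' ∩ Ce).card ≤ Ce.card :=
        Finset.card_le_card Finset.inter_subset_right
      refine ⟨m' + 1, Fin.cons u0 u', Fin.cons S T', by omega, rfl, ?_, ?_, ?_, ?_⟩
      · intro i
        induction i using Fin.cases with
        | zero => simpa using hT0
        | succ j =>
          rw [← Fin.succ_castSucc]
          simpa using hstep j
      · intro i
        induction i using Fin.cases with
        | zero => simpa using hu0
        | succ j =>
          rw [← Fin.succ_castSucc]
          simpa using hinc j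
      · intro i
        induction i using Fin.cases with
        | zero => simpa using hu0min
        | succ j =>
          rw [← Fin.succ_castSucc]
          simpa using hmin j
      · intro q hq
        have hofn : List.ofFn (Fin.cons u0 u' : Fin (m' + 1) → List A)
            = u0 :: List.ofFn u' := by
          rw [List.ofFn_succ]
          simp
        rw [hofn, List.reverse_cons, List.flatten_append, act_append]
        have h1 : act δ q (List.ofFn u').reverse.flatten ∈ S' := hland q hq
        have h2 : act (δ := δ) (act δ q (List.ofFn u').reverse.flatten) u0 ∈ S := by
          have := (Finset.mem_filter.mp h1).2
          exact this
        simpa [act, act_append] using h2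

theorem stmt13 {Q A : Type*} [Fintype Q] [DecidableEq Q] (δ : Q → A → Q)
    (hsync : ∃ (w : List A) (p : Q), ∀ q : Q, act δ q w = p)
    (hsc : ∀ p q : Q, ∃ u : List A, act δ p u = q)
    (Cs Ce : Finset Q) (vs ve : List A)
    (hCsCe : Cs ⊆ Ce)
    (hve : Finset.univ.image (fun q => act δ q ve) = Ce)
    (hvs : (Cs.image fun q => act δ q vs).card = 1) :
    ∃ (m : ℕ) (u : Fin m → List A) (S : Fin (m + 1) → Finset Q),
      m ≤ Ce.card - Cs.card ∧
      S 0 = Cs ∧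
      (∀ i : Fin m, S i.succ = preim δ (S i.castSucc) (u i)) ∧
      (∀ i : Fin m,
        ((S i.castSucc) ∩ Ce).card < (preim δ (S i.castSucc) (u i) ∩ Ce).card) ∧
      (∀ i : Fin m, ∀ u' : List A,
        ((S i.castSucc) ∩ Ce).card < (preim δ (S i.castSucc) u' ∩ Ce).card →
        (u i).length ≤ u'.length) ∧
      (∃ p : Q, ∀ q : Q,
        act δ q (ve ++ ((List.ofFn u).reverse).flatten ++ vs) = p) ∧
      (ve ++ ((List.ofFn u).reverse).flatten ++ vs).length ≤
        ve.length + vs.length +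
          (Ce.card - Cs.card) * (Finset.univ.sup fun i : Fin m => (u i).length) := by
  classical
  rw [Finset.card_eq_one] at hvs
  obtain ⟨a, ha⟩ := hvs
  have hCsne : Cs.Nonempty := by
    have h1 : (Cs.image fun q => act δ q vs).Nonempty :=
      ha ▸ Finset.singleton_nonempty a
    exact Finset.Nonempty.of_image h1
  have hvsconst : ∀ x ∈ Cs, act δ x vs = a := by
    intro x hx
    have : act δ x vs ∈ Cs.image fun q => act δ q vs :=
      Finset.mem_image_of_mem _ hx
    rw [ha, Finset.mem_singleton] at this
    exact this
  have hinter : Cs ∩ Ce = Cs := Finset.inter_eq_left.mpr hCsCe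
  obtain ⟨m, u, T, hm, hT0, hstep, hinc, hmin, hland⟩ :=
    build δ hsync hsc Ce Ce.card Cs hCsne (by omega)
  rw [hinter] at hm
  have hsup : ((List.ofFn u).reverse).flatten.length ≤
      m * (Finset.univ.sup fun i : Fin m => (u i).length) := by
    have h1 : ((List.ofFn u).reverse).flatten.length
        = ∑ i : Fin m, (u i).length := by
      simp [List.length_flatten, List.map_reverse, List.sum_reverse, List.sum_ofFn, Function.comp]
    rw [h1]
    calc ∑ i : Fin m, (u i).length
        ≤ ∑ _i : Fin m, (Finset.univ.sup fun i : Fin m => (u i).length) :=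
          Finset.sum_le_sum fun i _ => Finset.le_sup (f := fun i : Fin m => (u i).length) (Finset.mem_univ i)
      _ = m * _ := by simp [mul_comm]
  refine ⟨m, u, T, hm, hT0, hstep, hinc, hmin, ⟨a, fun q => ?_⟩, ?_⟩
  · rw [act_append, act_append]
    have hqCe : act δ q ve ∈ Ce := by
      rw [← hve]
      exact Finset.mem_image_of_mem _ (Finset.mem_univ q)
    have hCs : act δ (act δ q ve) ((List.ofFn u).reverse).flatten ∈ Cs := by
      exact hland (act δ q ve) hqCe
    exact hvsconst _ hCs
  · have hLle : ((List.ofFn u).reverse).flatten.length ≤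
        (Ce.card - Cs.card) * (Finset.univ.sup fun i : Fin m => (u i).length) :=
      le_trans hsup (Nat.mul_le_mul_right _ hm)
    simp only [List.length_append]
    omega
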